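/- With F and R as above: if R(0) < 0 then R has a unique root x* in (0, β₀), F' is strictly positive on (0, x*) and strictly negative on (x*, β₀), and x* is the unique maximizer of F on [0, β₀). -/

import Mathlib

/-!
Each term `(β₀ - x) / (σ_ℓ² + x)` is strictly decreasing in `x`, so `R` is strictly increasing
on `[0, β₀]`, going from `R 0 < 0` to `R β₀ = 1`; hence it has exactly one zero `x⋆` there.
Since `F' x = x / (x - β₀) * R x` and `x / (x - β₀) < 0` on `(0, β₀)`, `F` strictly increases
on `[0, x⋆]` and strictly decreases on `[x⋆, β₀)`.
-/

open Real Set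

theorem strictAntiOn_sub_div_add {b s : ℝ} (h : 0 < b + s) :
    StrictAntiOn (fun x => (b - x) / (s + x)) (Ioi (-s)) := by
  intro x hx y hy hxy
  have hx' : 0 < s + x := by simp only [mem_Ioi] at hx; linarith
  have hy' : 0 < s + y := by simp only [mem_Ioi] at hy; linarith
  rw [div_lt_div_iff₀ hy' hx']
  nlinarith

theorem apply_lt_of_deriv_pos_of_deriv_neg {f : ℝ → ℝ} {a b c x : ℝ} (hac : a ≤ c) (hcb : c < b)
    (hf : ContinuousOn f (Ico a b)) (hpos : ∀ y ∈ Ioo a c, 0 < deriv f y)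
    (hneg : ∀ y ∈ Ioo c b, deriv f y < 0) (hx : x ∈ Ico a b) (hxc : x ≠ c) : f x < f c := by
  rcases hxc.lt_or_gt with h | h
  · exact strictMonoOn_of_deriv_pos (convex_Icc a c) (hf.mono (Icc_subset_Ico_right hcb))
      (by rwa [interior_Icc]) ⟨hx.1, h.le⟩ ⟨hac, le_rfl⟩ h
  · exact strictAntiOn_of_deriv_neg (convex_Ico c b) (hf.mono (Ico_subset_Ico_left hac))
      (by rwa [interior_Ico]) ⟨le_rfl, hcb⟩ ⟨h.le, hx.2⟩ h

theorem hasDerivAt_mul_div_sub_mul_log_one_add_div (b : ℝ) {s x : ℝ} (hs : s ≠ 0)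
    (hsx : s + x ≠ 0) :
    HasDerivAt (fun y => b * y / s - b * Real.log (1 + y / s)) (b / s * (x / (s + x))) x := by
  have hlin : HasDerivAt (fun y => b * y / s) (b / s) x := by
    simpa using ((hasDerivAt_id' x).const_mul b).div_const s
  have hne : 1 + x / s ≠ 0 := by
    rw [one_add_div hs]
    exact div_ne_zero hsx hs
  have hlog : HasDerivAt (fun y => Real.log (1 + y / s)) (1 / s / (1 + x / s)) x :=
    (((hasDerivAt_id' x).div_const s).const_add 1).log hne
  refine (hlin.sub (hlog.const_mul b)).congr_deriv ?_
  field_simp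
  ring

section

variable {ι : Type*} [Fintype ι]

noncomputable def objective (β₀ : ℝ) (β σ : ι → ℝ) (x : ℝ) : ℝ :=
  x - β₀ * Real.log (β₀ / (β₀ - x))
    + ∑ ℓ, (β ℓ * x / (σ ℓ) ^ 2 - β ℓ * Real.log (1 + x / (σ ℓ) ^ 2))

noncomputable def signFactor (β₀ : ℝ) (β σ : ι → ℝ) (x : ℝ) : ℝ :=
  1 - ∑ ℓ, (β ℓ / (σ ℓ) ^ 2) * ((β₀ - x) / ((σ ℓ) ^ 2 + x))

theorem strictMonoOn_signFactor [Nonempty ι] {β₀ : ℝ} {β σ : ι → ℝ} (hβ₀ : 0 ≤ β₀)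
    (hβ : ∀ ℓ, 0 < β ℓ) (hσ : ∀ ℓ, σ ℓ ≠ 0) :
    StrictMonoOn (signFactor β₀ β σ) (Ici 0) := by
  intro x hx y hy hxy
  have hs : ∀ ℓ, 0 < σ ℓ ^ 2 := fun ℓ => pow_two_pos_of_ne_zero (hσ ℓ)
  refine sub_lt_sub_left (Finset.sum_lt_sum_of_nonempty Finset.univ_nonempty fun ℓ _ => ?_) 1
  refine mul_lt_mul_of_pos_left ?_ (div_pos (hβ ℓ) (hs ℓ))
  refine strictAntiOn_sub_div_add (by linarith [hs ℓ]) ?_ ?_ hxy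
  · simp only [mem_Ici, mem_Ioi] at hx ⊢; linarith [hs ℓ]
  · simp only [mem_Ici, mem_Ioi] at hy ⊢; linarith [hs ℓ]

theorem continuousOn_signFactor {β₀ : ℝ} {β σ : ι → ℝ} (hσ : ∀ ℓ, σ ℓ ≠ 0) :
    ContinuousOn (signFactor β₀ β σ) (Ici 0) := by
  intro x (hx : 0 ≤ x)
  have hs : ∀ ℓ, σ ℓ ^ 2 + x ≠ 0 := fun ℓ => by
    have := hσ ℓ
    positivity
  unfold signFactor
  exact ContinuousAt.continuousWithinAt (by fun_prop (disch := exact hs _))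

@[simp]
theorem signFactor_self (β₀ : ℝ) (β σ : ι → ℝ) : signFactor β₀ β σ β₀ = 1 := by
  simp [signFactor]

theorem hasDerivAt_objective {β₀ x : ℝ} {β σ : ι → ℝ} (hβ₀ : β₀ ≠ 0) (hσ : ∀ ℓ, σ ℓ ≠ 0)
    (hx₀ : 0 ≤ x) (hxβ : x < β₀) :
    HasDerivAt (objective β₀ β σ) (x / (x - β₀) * signFactor β₀ β σ x) x := by
  have hb : β₀ - x ≠ 0 := by linarith
  have hs : ∀ ℓ, σ ℓ ^ 2 + x ≠ 0 := fun ℓ => by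
    linarith [pow_two_pos_of_ne_zero (hσ ℓ)]
  have hlog : HasDerivAt (fun y => Real.log (β₀ / (β₀ - y))) (1 / (β₀ - x)) x := by
    refine (((hasDerivAt_const x β₀).fun_div ((hasDerivAt_id' x).const_sub β₀) hb).log
      (div_ne_zero hβ₀ hb)).congr_deriv ?_
    field_simp
    ring
  refine (((hasDerivAt_id' x).sub (hlog.const_mul β₀)).add
    (HasDerivAt.fun_sum fun ℓ _ => hasDerivAt_mul_div_sub_mul_log_one_add_div (β ℓ)
      (pow_ne_zero 2 (hσ ℓ)) (hs ℓ))).congr_deriv ?_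
  have : x - β₀ ≠ 0 := by linarith
  simp only [signFactor, mul_sub, mul_one, Finset.mul_sum]
  rw [sub_eq_add_neg _ (Finset.sum _ _), ← Finset.sum_neg_distrib]
  congr 1
  · field_simp
    ring
  · refine Finset.sum_congr rfl fun ℓ _ => ?_
    have := hs ℓ
    field_simp
    ring

end

/-- if `R(0) < 0` then `R` has a unique root `x⋆` in `(0, β₀)`, `F'` is
strictly positive on `(0, x⋆)` and strictly negative on `(x⋆, β₀)`, and `x⋆` is the
unique maximizer of `F` on `[0, β₀)`. -/
theorem stmt_8 (L : ℕ) (hL : 0 < L) (β₀ : ℝ) (hβ₀ : 0 < β₀)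
    (β σ : Fin L → ℝ) (hβ : ∀ ℓ, 0 < β ℓ) (hσ : ∀ ℓ, 0 < σ ℓ)
    (F R : ℝ → ℝ)
    (hF : ∀ x ∈ Set.Ico (0 : ℝ) β₀,
      F x = x - β₀ * Real.log (β₀ / (β₀ - x))
        + ∑ ℓ, (β ℓ * x / (σ ℓ) ^ 2 - β ℓ * Real.log (1 + x / (σ ℓ) ^ 2)))
    (hR : ∀ x ∈ Set.Ico (0 : ℝ) β₀,
      R x = 1 - ∑ ℓ, (β ℓ / (σ ℓ) ^ 2) * ((β₀ - x) / ((σ ℓ) ^ 2 + x)))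
    (hR0 : R 0 < 0) :
    ∃ xs ∈ Set.Ioo (0 : ℝ) β₀,
      R xs = 0 ∧
      (∀ y ∈ Set.Ioo (0 : ℝ) β₀, R y = 0 → y = xs) ∧
      (∀ x ∈ Set.Ioo (0 : ℝ) xs, 0 < deriv F x) ∧
      (∀ x ∈ Set.Ioo xs β₀, deriv F x < 0) ∧
      (∀ x ∈ Set.Ico (0 : ℝ) β₀, x ≠ xs → F x < F xs) := by
  have : Nonempty (Fin L) := ⟨⟨0, hL⟩⟩
  have hσ' : ∀ ℓ, σ ℓ ≠ 0 := fun ℓ => (hσ ℓ).ne'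
  have hFeq : EqOn F (objective β₀ β σ) (Ico 0 β₀) := hF
  have hReq : EqOn R (signFactor β₀ β σ) (Ico 0 β₀) := hR
  have hmono := strictMonoOn_signFactor hβ₀.le hβ hσ'
  obtain ⟨xs, hxs, hRxs⟩ : ∃ xs ∈ Ioo 0 β₀, signFactor β₀ β σ xs = 0 :=
    intermediate_value_Ioo hβ₀.le ((continuousOn_signFactor hσ').mono Icc_subset_Ici_self)
      ⟨hReq ⟨le_rfl, hβ₀⟩ ▸ hR0, by simp⟩
  have hderiv : ∀ x ∈ Ioo 0 β₀, deriv F x = x / (x - β₀) * signFactor β₀ β σ x := fun x hx =>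
    ((hasDerivAt_objective hβ₀.ne' hσ' hx.1.le hx.2).congr_of_eventuallyEq
      (hFeq.eventuallyEq_of_mem (Ico_mem_nhds hx.1 hx.2))).deriv
  have hcont : ContinuousOn F (Ico 0 β₀) := fun x hx =>
    (hasDerivAt_objective hβ₀.ne' hσ' hx.1 hx.2).continuousAt.continuousWithinAt.congr hFeq
      (hFeq hx)
  have hpos : ∀ x ∈ Ioo 0 xs, 0 < deriv F x := fun x hx => by
    have hxβ : x < β₀ := hx.2.trans hxs.2
    rw [hderiv x ⟨hx.1, hxβ⟩]
    refine mul_pos_of_neg_of_neg (div_neg_of_pos_of_neg hx.1 (by linarith)) ?_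
    exact hRxs ▸ hmono hx.1.le hxs.1.le hx.2
  have hneg : ∀ x ∈ Ioo xs β₀, deriv F x < 0 := fun x hx => by
    have hx₀ : 0 < x := hxs.1.trans hx.1
    rw [hderiv x ⟨hx₀, hx.2⟩]
    refine mul_neg_of_neg_of_pos (div_neg_of_pos_of_neg hx₀ (by linarith [hx.2])) ?_
    exact hRxs ▸ hmono hxs.1.le hx₀.le hx.1
  refine ⟨xs, hxs, hReq (Ioo_subset_Ico_self hxs) ▸ hRxs, fun y hy hRy => ?_, hpos, hneg,
    fun x hx => apply_lt_of_deriv_pos_of_deriv_neg hxs.1.le hxs.2 hcont hpos hneg hx⟩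
  exact hmono.injOn hy.1.le hxs.1.le
    ((hReq (Ioo_subset_Ico_self hy)).symm.trans (hRy.trans hRxs.symm))
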